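/- arXiv:1503.08477 — 4 statements merged into one kernel-verified Lean document; each statement's English description precedes it below -/
import Mathlib

section
/- Let l ∈ ℕ with l ≥ 2 and let γ ∈ A₁^loc(ℝ^{n+1}) with constant C_γ. For k ∈ ℤ≥0, m ∈ ℤⁿ set γ_{k,m} := 2^{kl} ∬_{Q_{k,m}×(0,2^{-k})} γ(x,t) dx dt. Then for every k ∈ ℕ and m ∈ ℤⁿ, ∑_{j=1}^{k} ∑_{m′∈ℤⁿ : Q_{k,m} ⊂ Q_{j,m′}} 2^{jn} γ_{j,m′} ≤ C_γ 2^{(k+1)(l−1)} ess inf_{(x,t) ∈ Q_{k,m}×(0,2^{-k})} γ(x,t). (For each j ∈ {1,…,k} there is exactly one m′ ∈ ℤⁿ with Q_{k,m} ⊂ Q_{j,m′}.) -/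
open MeasureTheory ENNReal Filter

noncomputable section

/-- Euclidean space `ℝ^d` modelled as functions `Fin d → ℝ`. -/
abbrev Euc (d : ℕ) := Fin d → ℝ

/-- The open axis-parallel cube with "lower-left" corner `a` and side length `r`. -/
def cube (d : ℕ) (a : Euc d) (r : ℝ) : Set (Euc d) :=
  {x | ∀ i, x i ∈ Set.Ioo (a i) (a i + r)}

/-- The open dyadic cube `Q_{k,m}` of rank `k` in `ℝ^d`. -/
def dyadicCube (d k : ℕ) (m : Fin d → ℤ) : Set (Euc d) :=
  cube d (fun i => (m i : ℝ) * (2:ℝ) ^ (-(k:ℤ))) ((2:ℝ) ^ (-(k:ℤ)))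

/-- The subset `Q × J` of `ℝ^{n+1} = ℝ^n × ℝ`. -/
def prodSet (n : ℕ) (Q : Set (Euc n)) (J : Set ℝ) : Set (Euc (n+1)) :=
  {z | (fun i : Fin n => z i.castSucc) ∈ Q ∧ z (Fin.last n) ∈ J}

/-- The box `Q_{k,m} × (0, 2^{-k}) ⊆ ℝ^{n+1}`. -/
def dyadicProd (n k : ℕ) (m : Fin n → ℤ) : Set (Euc (n+1)) :=
  prodSet n (dyadicCube n k m) (Set.Ioo 0 ((2:ℝ) ^ (-(k:ℤ))))

/-- The (extended-real) integral of the weight `γ` over the set `E`. -/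
def wInt (d : ℕ) (γ : Euc d → ℝ) (E : Set (Euc d)) : ℝ≥0∞ :=
  ∫⁻ z in E, ENNReal.ofReal (γ z)

/-- `γ ∈ A₁^loc(ℝ^{n+1})` with constant `Cγ` : `γ` is a weight (locally integrable and
positive a.e.) and `∫_Q γ ≤ Cγ |Q| essinf_Q γ` for every open axis-parallel cube `Q`
of side length `≤ 1`. -/
def A1loc (n : ℕ) (γ : Euc (n+1) → ℝ) (Cγ : ℝ) : Prop :=
  LocallyIntegrable γ volume ∧ (∀ᵐ z ∂(volume : Measure (Euc (n+1))), 0 < γ z) ∧ 1 ≤ Cγ ∧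
    ∀ (a : Euc (n+1)) (r : ℝ), 0 < r → r ≤ 1 →
      wInt (n+1) γ (cube (n+1) a r) ≤
        ENNReal.ofReal Cγ * ENNReal.ofReal r ^ (n+1) *
          essInf (fun z => ENNReal.ofReal (γ z)) (volume.restrict (cube (n+1) a r))

/-- First-order partial derivative (of a smooth test function) in direction `i`. -/
def pderiv' (d : ℕ) (i : Fin d) (ψ : Euc d → ℝ) : Euc d → ℝ :=
  fun x => fderiv ℝ ψ x (Pi.single i 1)

/-- Iterated partial derivative in direction `i`. -/
def iterPDeriv (d : ℕ) (i : Fin d) : ℕ → (Euc d → ℝ) → (Euc d → ℝ)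
  | 0, ψ => ψ
  | k+1, ψ => pderiv' d i (iterPDeriv d i k ψ)

/-- The derivative `D^α ψ` for a multi-index `α`. -/
def multiDeriv (d : ℕ) (α : Fin d → ℕ) (ψ : Euc d → ℝ) : Euc d → ℝ :=
  (List.finRange d).foldr (fun i g => iterPDeriv d i (α i) g) ψ

/-- `g` is the Sobolev weak derivative `D^α f` on the open set `U`. -/
def HasWeakDeriv (d : ℕ) (U : Set (Euc d)) (α : Fin d → ℕ) (f g : Euc d → ℝ) : Prop :=
  LocallyIntegrableOn f U ∧ LocallyIntegrableOn g U ∧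
    ∀ ψ : Euc d → ℝ, ContDiff ℝ (⊤ : ℕ∞) ψ → HasCompactSupport ψ → tsupport ψ ⊆ U →
      ∫ z in U, f z * multiDeriv d α ψ z = (-1:ℝ) ^ (∑ i, α i) * ∫ z in U, g z * ψ z

/-- `φ` is the trace of `f` on the hyperplane `{t = 0}`:
for every cube `Q ⊆ ℝ^n`, `∫_Q |φ(x) - f(x,t)| dx → 0` as `t → 0+`. -/
def IsTrace (n : ℕ) (f : Euc (n+1) → ℝ) (φ : Euc n → ℝ) : Prop :=
  ∀ (a : Euc n) (r : ℝ), 0 < r →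
    Tendsto (fun t : ℝ => ∫ x in cube n a r, |φ x - f (Fin.snoc x t)|)
      (nhdsWithin 0 (Set.Ioi 0)) (nhds 0)

/-- The finite difference `Δ^l(h)φ(x) = ∑_{i=0}^l (-1)^i C(l,i) φ(x + i h)`. -/
def finDiff (n l : ℕ) (φ : Euc n → ℝ) (h x : Euc n) : ℝ :=
  ∑ i ∈ Finset.range (l+1), (-1:ℝ)^i * (l.choose i : ℝ) * φ (x + (i:ℝ) • h)

/-- `δ^l(Q)φ = |Q|^{-2} ∫_{r(Q) I} ∫_Q |Δ^l(h)φ(x)| dx dh`, for the cube with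
corner `a` and side length `r` (so `r(Q)·I = (-r,r)^n`). -/
def deltaL (n l : ℕ) (φ : Euc n → ℝ) (a : Euc n) (r : ℝ) : ℝ≥0∞ :=
  (ENNReal.ofReal (r^n * r^n))⁻¹ *
    ∫⁻ h in cube n (fun _ => -r) (2*r), ∫⁻ x in cube n a r, ENNReal.ofReal |finDiff n l φ h x|

/-- `δ^l(Q_{k,m})φ`. -/
def deltaDyadic (n l : ℕ) (φ : Euc n → ℝ) (k : ℕ) (m : Fin n → ℤ) : ℝ≥0∞ :=
  deltaL n l φ (fun i => (m i : ℝ) * (2:ℝ) ^ (-(k:ℤ))) ((2:ℝ) ^ (-(k:ℤ)))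

/-- `γ_{k,m} := 2^{kl} ∬_{Q_{k,m} × (0,2^{-k})} γ`. -/
def gammaKM (n l : ℕ) (γ : Euc (n+1) → ℝ) (k : ℕ) (m : Fin n → ℤ) : ℝ≥0∞ :=
  (2:ℝ≥0∞) ^ (k * l) * wInt (n+1) γ (dyadicProd n k m)

/-- The norm of the Besov space of variable smoothness `B̃^l(ℝ^n, {γ_{k,m}})`. -/
def besovNorm (n l : ℕ) (γ : Euc (n+1) → ℝ) (φ : Euc n → ℝ) : ℝ≥0∞ :=
  (∑' k : ℕ, ∑' m : Fin n → ℤ, gammaKM n l γ (k+1) m * deltaDyadic n l φ (k+1) m) +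
    ∑' m : Fin n → ℤ, gammaKM n l γ 0 m * ∫⁻ x in dyadicCube n 0 m, ENNReal.ofReal |φ x|

/-- The finite set of multi-indices `α` with `|α| ≤ l`. -/
def multiIdxLe (d l : ℕ) : Finset (Fin d → ℕ) :=
  (Fintype.piFinset fun _ : Fin d => Finset.range (l+1)).filter fun α => ∑ i, α i ≤ l

/-- The weighted Sobolev norm `∑_{|α| ≤ l} ∫_U γ |D^α f|`, the family `Df` providing
the weak derivatives (`Df 0 = f`). -/
def WNorm (d l : ℕ) (γ : Euc d → ℝ) (U : Set (Euc d)) (Df : (Fin d → ℕ) → Euc d → ℝ) : ℝ≥0∞ :=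
  ∑ α ∈ multiIdxLe d l, ∫⁻ z in U, ENNReal.ofReal (γ z * |Df α z|)

/-- The open upper half-space `ℝ^{n+1}_+ = ℝ^n × (0,∞)`. -/
def upperHalf (n : ℕ) : Set (Euc (n+1)) := {z | 0 < z (Fin.last n)}

/-- The weighted Sobolev norm `‖f‖_{W¹₁(ℝ^{n+1}_+, γ)}` where `Df i` is the weak
derivative of `f` in direction `i`. -/
def W1Norm (n : ℕ) (γ f : Euc (n+1) → ℝ) (Df : Fin (n+1) → Euc (n+1) → ℝ) : ℝ≥0∞ :=
  (∫⁻ z in upperHalf n, ENNReal.ofReal (γ z * |f z|)) +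
    ∑ i : Fin (n+1), ∫⁻ z in upperHalf n, ENNReal.ofReal (γ z * |Df i z|)

/-- The weighted Sobolev norm `‖f‖_{W¹₁(ℝ^{n+1}_+, γ)}` for a (smooth) function,
using classical derivatives. -/
def W1NormSmooth (n : ℕ) (γ f : Euc (n+1) → ℝ) : ℝ≥0∞ :=
  (∫⁻ z in upperHalf n, ENNReal.ofReal (γ z * |f z|)) +
    ∑ i : Fin (n+1), ∫⁻ z in upperHalf n, ENNReal.ofReal (γ z * |fderiv ℝ f z (Pi.single i 1)|)

/-- `γ̂_{k,m}` : the average of `γ` over `Q_{k,m} × (0, 2^{-k})`. -/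
def gammaHat (n : ℕ) (γ : Euc (n+1) → ℝ) (k : ℕ) (m : Fin n → ℤ) : ℝ≥0∞ :=
  (2:ℝ≥0∞) ^ (k * (n+1)) * wInt (n+1) γ (dyadicProd n k m)

/-- A tiling of `ℝ^n` by closed dyadic cubes with pairwise disjoint interiors. -/
structure Tiling (n : ℕ) where
  idx : Set (ℕ × (Fin n → ℤ))
  disj : ∀ α ∈ idx, ∀ β ∈ idx, α ≠ β → dyadicCube n α.1 α.2 ∩ dyadicCube n β.1 β.2 = ∅
  cover : (⋃ α ∈ idx, closure (dyadicCube n α.1 α.2)) = Set.univ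

/-- The dilate `(1+λ) Q_{k,m}` of the dyadic cube `Q_{k,m}` about its center. -/
def dilatedCube (n : ℕ) (lam : ℝ) (k : ℕ) (m : Fin n → ℤ) : Set (Euc n) :=
  cube n (fun i => (m i : ℝ) * (2:ℝ) ^ (-(k:ℤ)) - lam * (2:ℝ) ^ (-(k:ℤ)) / 2)
    ((1 + lam) * (2:ℝ) ^ (-(k:ℤ)))

/-- `T'` succeeds `T` : every cube of `T'` is contained in some cube of `T`. -/
def Succeeds (n : ℕ) (T' T : Tiling n) : Prop :=
  ∀ α ∈ T'.idx, ∃ β ∈ T.idx, closure (dyadicCube n α.1 α.2) ⊆ closure (dyadicCube n β.1 β.2)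

/-- A system of tilings: each tiling succeeds the previous one. -/
def SystemOfTilings (n : ℕ) (T : ℕ → Tiling n) : Prop :=
  ∀ s, Succeeds n (T (s+1)) (T s)

/-- A system of tilings admissible for the weight `γ` with constants `c₁, c₂`
(and dilation parameter `λ`). -/
def AdmissibleSystem (n : ℕ) (γ : Euc (n+1) → ℝ) (lam c₁ c₂ : ℝ) (T : ℕ → Tiling n) : Prop :=
  SystemOfTilings n T ∧
    (∀ s, ∀ α ∈ (T s).idx, ∀ α' ∈ (T s).idx,
      (dilatedCube n lam α.1 α.2 ∩ dilatedCube n lam α'.1 α'.2).Nonempty →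
        gammaHat n γ α.1 α.2 ≤ ENNReal.ofReal c₁ * gammaHat n γ α'.1 α'.2) ∧
    (∀ s, ∀ α ∈ (T s).idx, ∀ α' ∈ (T (s+1)).idx,
      dyadicCube n α'.1 α'.2 ⊆ dyadicCube n α.1 α.2 →
        gammaHat n γ α.1 α.2 ≤ ENNReal.ofReal c₂ * gammaHat n γ α'.1 α'.2 ∧
          gammaHat n γ α'.1 α'.2 ≤ ENNReal.ofReal c₂ * gammaHat n γ α.1 α.2) ∧
    (∀ s, ∀ x : Euc n, ∀ α' ∈ (T (s+1)).idx, ∀ α ∈ (T s).idx,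
      x ∈ dilatedCube n lam α'.1 α'.2 → x ∈ dilatedCube n lam α.1 α.2 →
        (2:ℝ) ^ (-(α'.1:ℤ)) ≤ (1/2) * (2:ℝ) ^ (-(α.1:ℤ))) ∧
    (∃ l : ℕ → ℕ, StrictMono l ∧ l 0 = 0 ∧
      ∀ s, ∀ α ∈ (T s).idx, (2:ℝ) ^ (-(l s : ℤ)) ≤ (2:ℝ) ^ (-(α.1:ℤ)))

/-- A selected index set `Ã ⊆ A` for a tiling, as produced by Lemma 4.1. -/
def SelectedIndexSet (n : ℕ) (lam : ℝ) (T : Tiling n) (S : Set (ℕ × (Fin n → ℤ))) : Prop :=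
  S ⊆ T.idx ∧
    (⋃ α ∈ S, dilatedCube n lam α.1 α.2) = Set.univ ∧
    (∀ x : Euc n, ∀ F : Finset (ℕ × (Fin n → ℤ)), ↑F ⊆ S →
      (∀ α ∈ F, x ∈ dilatedCube n lam α.1 α.2) → F.card ≤ (n+1) * 2^n) ∧
    (∃ c : ℝ, 0 < c ∧ ∀ α ∈ S, ∀ α' ∈ S,
      (dilatedCube n lam α.1 α.2 ∩ dilatedCube n lam α'.1 α'.2).Nonempty →
        ENNReal.ofReal c * min (volume (dyadicCube n α.1 α.2)) (volume (dyadicCube n α'.1 α'.2))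
          ≤ volume (dilatedCube n lam α.1 α.2 ∩ dilatedCube n lam α'.1 α'.2)) ∧
    (∀ α ∈ S, ¬ dilatedCube n lam α.1 α.2 ⊆ ⋃ α' ∈ S \ {α}, dilatedCube n lam α'.1 α'.2)

/-- Best `L¹(E)`-approximation of `φ` by constants: `E(Q)φ = inf_c ∫_E |φ - c|`. -/
def bestApprox (n : ℕ) (E : Set (Euc n)) (φ : Euc n → ℝ) : ℝ≥0∞ :=
  ⨅ c : ℝ, ∫⁻ x in E, ENNReal.ofReal |φ x - c|

/-- The average of `φ` over `E`. -/
def avgOn (n : ℕ) (E : Set (Euc n)) (φ : Euc n → ℝ) : ℝ :=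
  (volume E).toReal⁻¹ * ∫ x in E, φ x

/-- The quantity
`∑_m γ̂_{0,m} ‖φ‖_{L¹(Q_{0,m})} + ∑_{s≥1} ∑_{α ∈ Ã^s} γ̂^s_α ∫_{Q̃^s_α} |φ^s_α - φ|`. -/
def traceSum (n : ℕ) (γ : Euc (n+1) → ℝ) (lam : ℝ) (φ : Euc n → ℝ)
    (S : ℕ → Set (ℕ × (Fin n → ℤ))) : ℝ≥0∞ :=
  (∑' m : Fin n → ℤ, gammaHat n γ 0 m * ∫⁻ x in dyadicCube n 0 m, ENNReal.ofReal |φ x|) +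
    ∑' s : ℕ, ∑' α : S (s+1),
      gammaHat n γ α.1.1 α.1.2 *
        ∫⁻ x in dilatedCube n lam α.1.1 α.1.2,
          ENNReal.ofReal |avgOn n (dilatedCube n lam α.1.1 α.1.2) φ - φ x|

/-- The quantity
`∑_m γ̂_{0,m} ‖φ‖_{L¹(Q_{0,m})} + ∑_{s≥1} ∑_{α ∈ Ã^s} γ̂^s_α E(Q̃^s_α)φ`. -/
def traceSumE (n : ℕ) (γ : Euc (n+1) → ℝ) (lam : ℝ) (φ : Euc n → ℝ)
    (S : ℕ → Set (ℕ × (Fin n → ℤ))) : ℝ≥0∞ :=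
  (∑' m : Fin n → ℤ, gammaHat n γ 0 m * ∫⁻ x in dyadicCube n 0 m, ENNReal.ofReal |φ x|) +
    ∑' s : ℕ, ∑' α : S (s+1),
      gammaHat n γ α.1.1 α.1.2 * bestApprox n (dilatedCube n lam α.1.1 α.1.2) φ

end

open scoped ENNReal
open MeasureTheory Filter

lemma dyadicCube_nonempty (d j : ℕ) (m : Fin d → ℤ) : (dyadicCube d j m).Nonempty := by
  refine ⟨fun i => (m i : ℝ) * (2:ℝ)^(-(j:ℤ)) + (2:ℝ)^(-(j:ℤ))/2, fun i => ?_⟩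
  have h : (0:ℝ) < (2:ℝ)^(-(j:ℤ)) := by positivity
  constructor <;> simp <;> linarith

lemma dyadicCube_unique (d j : ℕ) {m m' : Fin d → ℤ} {x : Euc d}
    (h1 : x ∈ dyadicCube d j m) (h2 : x ∈ dyadicCube d j m') : m = m' := by
  have hc : (0:ℝ) < (2:ℝ)^(-(j:ℤ)) := by positivity
  funext i
  obtain ⟨a1, b1⟩ := h1 i
  obtain ⟨a2, b2⟩ := h2 i
  simp only at a1 b1 a2 b2
  have l1 : (m i : ℝ) * (2:ℝ)^(-(j:ℤ)) < ((m' i : ℝ) + 1) * (2:ℝ)^(-(j:ℤ)) := by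
    rw [add_mul, one_mul]; linarith
  have l2 : (m' i : ℝ) * (2:ℝ)^(-(j:ℤ)) < ((m i : ℝ) + 1) * (2:ℝ)^(-(j:ℤ)) := by
    rw [add_mul, one_mul]; linarith
  have e1 : (m i : ℝ) < (m' i : ℝ) + 1 := lt_of_mul_lt_mul_right l1 hc.le
  have e2 : (m' i : ℝ) < (m i : ℝ) + 1 := lt_of_mul_lt_mul_right l2 hc.le
  have q1 : m i < m' i + 1 := by exact_mod_cast e1
  have q2 : m' i < m i + 1 := by exact_mod_cast e2
  omega

lemma dyadicProd_eq_cube (n j : ℕ) (m : Fin n → ℤ) :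
    dyadicProd n j m =
      cube (n+1) (Fin.snoc (fun i => (m i : ℝ) * (2:ℝ)^(-(j:ℤ))) 0) ((2:ℝ)^(-(j:ℤ))) := by
  ext z
  simp only [dyadicProd, prodSet, dyadicCube, cube, Set.mem_setOf_eq]
  constructor
  · rintro ⟨h1, h2⟩ i
    refine Fin.lastCases ?_ ?_ i
    · simpa [Fin.snoc_last] using h2
    · intro i
      simpa [Fin.snoc_castSucc] using h1 i
  · intro h
    refine ⟨fun i => ?_, ?_⟩
    · simpa [Fin.snoc_castSucc] using h i.castSucc
    · simpa [Fin.snoc_last] using h (Fin.last n)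

lemma dyadicProd_subset (n j k : ℕ) (hjk : j ≤ k) (m m' : Fin n → ℤ)
    (h : dyadicCube n k m ⊆ dyadicCube n j m') :
    dyadicProd n k m ⊆ dyadicProd n j m' := by
  rintro z ⟨h1, h2a, h2b⟩
  refine ⟨h h1, h2a, h2b.trans_le ?_⟩
  exact zpow_le_zpow_right₀ one_le_two (by omega)

lemma geom_sum_le_aux (a : ℕ) (ha : 1 ≤ a) (k : ℕ) :
    ∑ j ∈ Finset.Icc 1 k, 2^(j*a) ≤ 2^((k+1)*a) := by
  induction k with
  | zero => simp [Nat.one_le_two_pow]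
  | succ k ih =>
    rw [Finset.sum_Icc_succ_top (by omega)]
    have h1 : 2^((k+1)*a) + 2^((k+1)*a) = 2^((k+1)*a + 1) := by ring
    have h2 : 2^((k+1)*a + 1) ≤ 2^((k+1+1)*a) := Nat.pow_le_pow_right (by norm_num) (by nlinarith)
    omega

theorem statement6 (n l : ℕ) (hl : 2 ≤ l) (γ : Euc (n+1) → ℝ) (Cγ : ℝ)
    (hγ : A1loc n γ Cγ) (k : ℕ) (hk : 1 ≤ k) (m : Fin n → ℤ) :
    ∑ j ∈ Finset.Icc 1 k,
        ∑' m' : {m' : Fin n → ℤ // dyadicCube n k m ⊆ dyadicCube n j m'},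
          (2:ℝ≥0∞) ^ (j * n) * gammaKM n l γ j m'.1 ≤
      ENNReal.ofReal Cγ * (2:ℝ≥0∞) ^ ((k+1) * (l-1)) *
        essInf (fun z => ENNReal.ofReal (γ z)) (volume.restrict (dyadicProd n k m)) := by
  obtain ⟨hloc, hpos, hC1, hA1⟩ := hγ
  set E := essInf (fun z => ENNReal.ofReal (γ z)) (volume.restrict (dyadicProd n k m)) with hE
  have key : ∀ j ∈ Finset.Icc 1 k,
      (∑' m' : {m' : Fin n → ℤ // dyadicCube n k m ⊆ dyadicCube n j m'},
        (2:ℝ≥0∞) ^ (j * n) * gammaKM n l γ j m'.1) ≤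
      ENNReal.ofReal Cγ * (2:ℝ≥0∞)^(j*(l-1)) * E := by
    intro j hj
    obtain ⟨hj1, hjk⟩ := Finset.mem_Icc.mp hj
    haveI hsub : Subsingleton {m' : Fin n → ℤ // dyadicCube n k m ⊆ dyadicCube n j m'} := by
      constructor
      rintro ⟨m1, h1⟩ ⟨m2, h2⟩
      obtain ⟨x, hx⟩ := dyadicCube_nonempty n k m
      exact Subtype.ext (dyadicCube_unique n j (h1 hx) (h2 hx))
    rcases isEmpty_or_nonempty {m' : Fin n → ℤ // dyadicCube n k m ⊆ dyadicCube n j m'} with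
      hemp | ⟨⟨m', hm'⟩⟩
    · rw [tsum_empty]; exact zero_le
    · rw [tsum_eq_single ⟨m', hm'⟩ (fun b hb => absurd (Subsingleton.elim b ⟨m', hm'⟩) hb)]
      -- bound the single term
      have hr0 : (0:ℝ) < (2:ℝ)^(-(j:ℤ)) := by positivity
      have hr1 : (2:ℝ)^(-(j:ℤ)) ≤ 1 := by
        apply zpow_le_one_of_nonpos₀ one_le_two (by omega)
      have hofr : ENNReal.ofReal ((2:ℝ)^(-(j:ℤ))) = ((2:ℝ≥0∞)^j)⁻¹ := by
        rw [zpow_neg, zpow_natCast, ENNReal.ofReal_inv_of_pos (by positivity),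
          ENNReal.ofReal_pow (by norm_num)]
        norm_num
      have hmono : essInf (fun z => ENNReal.ofReal (γ z))
          (volume.restrict (dyadicProd n j m')) ≤ E := by
        rw [hE]
        refine essInf_antitone_measure (Measure.absolutelyContinuous_of_le ?_)
        exact Measure.restrict_mono (dyadicProd_subset n j k hjk m m' hm') le_rfl
      have hW : wInt (n+1) γ (dyadicProd n j m') ≤
          ENNReal.ofReal Cγ * ((2:ℝ≥0∞)^(j*(n+1)))⁻¹ * E := by
        rw [dyadicProd_eq_cube]
        calc wInt (n+1) γ (cube (n+1) _ ((2:ℝ)^(-(j:ℤ))))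
            ≤ ENNReal.ofReal Cγ * ENNReal.ofReal ((2:ℝ)^(-(j:ℤ))) ^ (n+1) *
              essInf (fun z => ENNReal.ofReal (γ z))
                (volume.restrict (cube (n+1) _ ((2:ℝ)^(-(j:ℤ))))) := hA1 _ _ hr0 hr1
          _ ≤ ENNReal.ofReal Cγ * ((2:ℝ≥0∞)^(j*(n+1)))⁻¹ * E := by
              rw [← dyadicProd_eq_cube, hofr, ← ENNReal.inv_pow, ← pow_mul]
              exact mul_le_mul_right hmono _
      have h2ne : ((2:ℝ≥0∞)^(j*(n+1))) ≠ 0 := by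
        exact pow_ne_zero _ (by norm_num)
      have h2nt : ((2:ℝ≥0∞)^(j*(n+1))) ≠ ⊤ := by
        exact ENNReal.pow_ne_top (by norm_num)
      calc (2:ℝ≥0∞) ^ (j * n) * gammaKM n l γ j m'
          = (2:ℝ≥0∞) ^ (j*n) * (2:ℝ≥0∞) ^ (j*l) * wInt (n+1) γ (dyadicProd n j m') := by
            rw [gammaKM, mul_assoc]
        _ ≤ (2:ℝ≥0∞) ^ (j*n) * (2:ℝ≥0∞) ^ (j*l) *
            (ENNReal.ofReal Cγ * ((2:ℝ≥0∞)^(j*(n+1)))⁻¹ * E) := mul_le_mul_right hW _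
        _ = ENNReal.ofReal Cγ * (2:ℝ≥0∞)^(j*(l-1)) * E *
            ((2:ℝ≥0∞)^(j*(n+1)) * ((2:ℝ≥0∞)^(j*(n+1)))⁻¹) := by
            rw [← pow_add]
            have : j*n + j*l = j*(l-1) + j*(n+1) := by
              obtain ⟨t, ht⟩ : ∃ t, l = t + 2 := ⟨l - 2, by omega⟩
              subst ht
              have : t + 2 - 1 = t + 1 := rfl
              rw [this]; ring
            rw [this, pow_add]
            ring
        _ = ENNReal.ofReal Cγ * (2:ℝ≥0∞)^(j*(l-1)) * E := by
            rw [ENNReal.mul_inv_cancel h2ne h2nt, mul_one]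
  have hsum : (∑ j ∈ Finset.Icc 1 k, (2:ℝ≥0∞)^(j*(l-1))) ≤ (2:ℝ≥0∞)^((k+1)*(l-1)) := by
    calc ∑ j ∈ Finset.Icc 1 k, (2:ℝ≥0∞)^(j*(l-1))
        = ((∑ j ∈ Finset.Icc 1 k, 2^(j*(l-1)) : ℕ) : ℝ≥0∞) := by push_cast; rfl
      _ ≤ ((2^((k+1)*(l-1)) : ℕ) : ℝ≥0∞) := by
          exact_mod_cast Nat.cast_le.mpr (geom_sum_le_aux (l-1) (by omega) k)
      _ = (2:ℝ≥0∞)^((k+1)*(l-1)) := by push_cast; rfl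
  calc ∑ j ∈ Finset.Icc 1 k,
        ∑' m' : {m' : Fin n → ℤ // dyadicCube n k m ⊆ dyadicCube n j m'},
          (2:ℝ≥0∞) ^ (j * n) * gammaKM n l γ j m'.1
      ≤ ∑ j ∈ Finset.Icc 1 k, ENNReal.ofReal Cγ * (2:ℝ≥0∞)^(j*(l-1)) * E :=
        Finset.sum_le_sum key
    _ = ENNReal.ofReal Cγ * (∑ j ∈ Finset.Icc 1 k, (2:ℝ≥0∞)^(j*(l-1))) * E := by
        rw [Finset.mul_sum, Finset.sum_mul]
    _ ≤ ENNReal.ofReal Cγ * (2:ℝ≥0∞)^((k+1)*(l-1)) * E := by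
        gcongr
end

section
/- Let γ ∈ A₁^loc(ℝ^{n+1}) with constant C_γ. Let f, g ∈ L¹_loc(ℝⁿ × (0,1)) be such that g is the Sobolev weak derivative of f with respect to t, and let φ ∈ L¹_loc(ℝⁿ) be such that for almost every x ∈ ℝⁿ, f(x,t) − φ(x) = ∫_0^t g(x,τ) dτ for almost every t ∈ (0,1). Then ∑_{m∈ℤⁿ} γ_{0,m} ∫_{Q_{0,m}} |φ(x)| dx ≤ C_γ ( ∬_{ℝⁿ×(0,1)} γ(x,t)|g(x,t)| dx dt + ∬_{ℝⁿ×(0,1)} γ(x,t)|f(x,t)| dx dt ), where γ_{0,m} := ∬_{Q_{0,m}×(0,1)} γ(x,t) dx dt. -/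
open MeasureTheory ENNReal Filter

open scoped ENNReal
open MeasureTheory Filter

section helpers
open MeasureTheory ENNReal

lemma measurableSet_cube' (d : ℕ) (a : Euc d) (r : ℝ) : MeasurableSet (cube d a r) := by
  have : cube d a r = ⋂ i, (fun z : Euc d => z i) ⁻¹' Set.Ioo (a i) (a i + r) := by
    ext z; simp [cube, Set.mem_iInter]
  rw [this]
  exact MeasurableSet.iInter fun i => (measurable_pi_apply i) measurableSet_Ioo

lemma measurableSet_prodSet' {n : ℕ} {Q : Set (Euc n)} {J : Set ℝ}
    (hQ : MeasurableSet Q) (hJ : MeasurableSet J) : MeasurableSet (prodSet n Q J) := by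
  have h1 : Measurable (fun z : Euc (n+1) => (fun i : Fin n => z i.castSucc)) :=
    measurable_pi_lambda _ fun i => measurable_pi_apply _
  exact (h1 hQ).inter ((measurable_pi_apply (Fin.last n)) hJ)

private lemma aemeas_lintegral_right {α β : Type*} [MeasurableSpace α] [MeasurableSpace β]
    {μ : Measure α} {ν : Measure β} [SFinite ν] {f : α × β → ℝ≥0∞}
    (hf : AEMeasurable f (μ.prod ν)) :
    AEMeasurable (fun x => ∫⁻ y, f (x, y) ∂ν) μ := by
  refine ⟨fun x => ∫⁻ y, hf.mk f (x, y) ∂ν, hf.measurable_mk.lintegral_prod_right', ?_⟩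
  filter_upwards [Measure.ae_ae_of_ae_prod hf.ae_eq_mk] with x hx using lintegral_congr_ae hx

end helpers

section fubini
open MeasureTheory ENNReal

lemma fubini_box (n : ℕ) {Q : Set (Euc n)} (hQ : MeasurableSet Q) {H : Euc (n+1) → ℝ≥0∞}
    (hH : AEMeasurable H (volume.restrict (prodSet n Q (Set.Ioo 0 1)))) :
    (∫⁻ z in prodSet n Q (Set.Ioo 0 1), H z)
      = (∫⁻ x in Q, ∫⁻ t in Set.Ioo (0:ℝ) 1, H (Fin.snoc x t)) ∧
    AEMeasurable (fun x => ∫⁻ t in Set.Ioo (0:ℝ) 1, H (Fin.snoc x t)) (volume.restrict Q) := by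
  set e := MeasurableEquiv.piFinSuccAbove (fun _ : Fin (n+1) => ℝ) (Fin.last n) with he
  have hmp : MeasurePreserving e.symm
      ((volume : Measure ℝ).prod (volume : Measure (Euc n))) (volume : Measure (Euc (n+1))) := by
    have := (volume_preserving_piFinSuccAbove (fun _ : Fin (n+1) => ℝ) (Fin.last n)).symm
    rwa [Measure.volume_eq_prod] at this
  have hsnoc : ∀ (t : ℝ) (x : Euc n), e.symm (t, x) = Fin.snoc x t := by
    intro t x
    simp [he, MeasurableEquiv.piFinSuccAbove, Fin.insertNthEquiv, Fin.insertNth_last']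
  have hS : MeasurableSet (prodSet n Q (Set.Ioo 0 1)) :=
    measurableSet_prodSet' hQ measurableSet_Ioo
  have hpre : e.symm ⁻¹' (prodSet n Q (Set.Ioo 0 1)) = (Set.Ioo (0:ℝ) 1) ×ˢ Q := by
    ext ⟨t, x⟩
    have h1 : (fun i : Fin n => (Fin.snoc x t : Euc (n+1)) i.castSucc) = x := by
      funext i; simp
    simp only [Set.mem_preimage, hsnoc, prodSet, Set.mem_setOf_eq, h1, Fin.snoc_last,
      Set.mem_prod, and_comm]
  have hmap : Measure.map e.symm
      (((volume : Measure ℝ).restrict (Set.Ioo 0 1)).prod ((volume : Measure (Euc n)).restrict Q))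
      = volume.restrict (prodSet n Q (Set.Ioo 0 1)) := by
    rw [Measure.prod_restrict, ← hpre, ← Measure.restrict_map e.symm.measurable hS, hmp.map_eq]
  have hH' : AEMeasurable (fun p : ℝ × Euc n => H (e.symm p))
      (((volume : Measure ℝ).restrict (Set.Ioo 0 1)).prod
        ((volume : Measure (Euc n)).restrict Q)) := by
    refine hH.comp_quasiMeasurePreserving ⟨e.symm.measurable, ?_⟩
    rw [hmap]
  constructor
  · calc ∫⁻ z in prodSet n Q (Set.Ioo 0 1), H z
        = ∫⁻ p, H (e.symm p) ∂(((volume : Measure ℝ).restrict (Set.Ioo 0 1)).prod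
            ((volume : Measure (Euc n)).restrict Q)) := by
          rw [← hmap, MeasureTheory.lintegral_map_equiv]
    _ = ∫⁻ x in Q, ∫⁻ t in Set.Ioo (0:ℝ) 1, H (e.symm (t, x)) := lintegral_prod_symm _ hH'
    _ = ∫⁻ x in Q, ∫⁻ t in Set.Ioo (0:ℝ) 1, H (Fin.snoc x t) := by simp_rw [hsnoc]
  · have hsw : AEMeasurable (fun p : Euc n × ℝ => H (e.symm (p.2, p.1)))
        (((volume : Measure (Euc n)).restrict Q).prod
          ((volume : Measure ℝ).restrict (Set.Ioo 0 1))) := hH'.prod_swap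
    have := aemeas_lintegral_right hsw
    simp only [hsnoc] at this
    exact this
end fubini

section geom
open MeasureTheory ENNReal

lemma prodSet_dyadic_eq_cube (n : ℕ) (m : Fin n → ℤ) :
    prodSet n (dyadicCube n 0 m) (Set.Ioo 0 1)
      = cube (n+1) (Fin.snoc (fun i => (m i : ℝ)) 0) 1 := by
  have h2 : ((2:ℝ) ^ (-((0:ℕ):ℤ))) = 1 := by norm_num
  ext z
  simp only [prodSet, dyadicCube, cube, Set.mem_setOf_eq, h2, mul_one]
  constructor
  · rintro ⟨ha, hb⟩ i
    refine Fin.lastCases ?_ ?_ i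
    · simpa using hb
    · intro j; simpa using ha j
  · intro h
    refine ⟨fun j => ?_, ?_⟩
    · simpa using h j.castSucc
    · simpa using h (Fin.last n)

lemma dyadic_disjoint (n : ℕ) {m m' : Fin n → ℤ} (h : m ≠ m') :
    Disjoint (prodSet n (dyadicCube n 0 m) (Set.Ioo 0 1))
      (prodSet n (dyadicCube n 0 m') (Set.Ioo 0 1)) := by
  rw [Set.disjoint_left]
  rintro z ⟨h1, -⟩ ⟨h2, -⟩
  obtain ⟨i, hi⟩ : ∃ i, m i ≠ m' i := by
    by_contra hc; push_neg at hc; exact h (funext hc)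
  have e1 := h1 i
  have e2 := h2 i
  have h2' : ((2:ℝ) ^ (-((0:ℕ):ℤ))) = 1 := by norm_num
  simp only [Set.mem_Ioo, h2', mul_one] at e1 e2
  rcases lt_or_gt_of_ne hi with hlt | hlt
  · have : ((m i : ℝ) + 1) ≤ (m' i : ℝ) := by exact_mod_cast Int.lt_iff_add_one_le.mp hlt
    linarith [e1.2, e2.1]
  · have : ((m' i : ℝ) + 1) ≤ (m i : ℝ) := by exact_mod_cast Int.lt_iff_add_one_le.mp hlt
    linarith [e1.1, e2.2]
end geom

section ptwise
open MeasureTheory ENNReal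

lemma pointwise_bound (n : ℕ) (f g : Euc (n+1) → ℝ) (φ : Euc n → ℝ)
    (hrep : ∀ᵐ x ∂(volume : Measure (Euc n)),
      ∀ᵐ t ∂(volume.restrict (Set.Ioo (0:ℝ) 1)),
        f (Fin.snoc x t) - φ x = ∫ τ in (0:ℝ)..t, g (Fin.snoc x τ)) :
    ∀ᵐ x ∂(volume : Measure (Euc n)),
      ENNReal.ofReal |φ x| ≤
        (∫⁻ t in Set.Ioo (0:ℝ) 1, ENNReal.ofReal |f (Fin.snoc x t)|)
          + ∫⁻ t in Set.Ioo (0:ℝ) 1, ENNReal.ofReal |g (Fin.snoc x t)| := by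
  filter_upwards [hrep] with x hx
  set G : ℝ≥0∞ := ∫⁻ t in Set.Ioo (0:ℝ) 1, ENNReal.ofReal |g (Fin.snoc x t)| with hG
  have hb : ∀ᵐ t ∂(volume.restrict (Set.Ioo (0:ℝ) 1)),
      ENNReal.ofReal |φ x| ≤ ENNReal.ofReal |f (Fin.snoc x t)| + G := by
    filter_upwards [hx, ae_restrict_mem measurableSet_Ioo] with t ht htI
    have hφeq : φ x = f (Fin.snoc x t) - ∫ τ in (0:ℝ)..t, g (Fin.snoc x τ) := by
      linarith [ht]
    have habs : |φ x| ≤ |f (Fin.snoc x t)| + |∫ τ in (0:ℝ)..t, g (Fin.snoc x τ)| := by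
      rw [hφeq]; exact abs_sub _ _
    have hkey : ENNReal.ofReal |∫ τ in (0:ℝ)..t, g (Fin.snoc x τ)| ≤ G := by
      by_cases hInt : IntervalIntegrable (fun τ => g (Fin.snoc x τ)) volume 0 t
      · rw [intervalIntegral.integral_of_le htI.1.le]
        calc ENNReal.ofReal |∫ τ in Set.Ioc (0:ℝ) t, g (Fin.snoc x τ)|
            ≤ ENNReal.ofReal (∫ τ in Set.Ioc (0:ℝ) t, |g (Fin.snoc x τ)|) := by
              apply ENNReal.ofReal_le_ofReal
              simpa [Real.norm_eq_abs] using
                norm_integral_le_integral_norm (μ := volume.restrict (Set.Ioc 0 t))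
                  (fun τ => g (Fin.snoc x τ))
          _ = ∫⁻ τ in Set.Ioc (0:ℝ) t, ENNReal.ofReal |g (Fin.snoc x τ)| := by
              apply ofReal_integral_eq_lintegral_ofReal hInt.1.abs
              exact Eventually.of_forall fun τ => abs_nonneg _
          _ ≤ G := lintegral_mono_set fun τ hτ => ⟨hτ.1, lt_of_le_of_lt hτ.2 htI.2⟩
      · rw [intervalIntegral.integral_undef hInt]
        simp
    calc ENNReal.ofReal |φ x|
        ≤ ENNReal.ofReal (|f (Fin.snoc x t)| + |∫ τ in (0:ℝ)..t, g (Fin.snoc x τ)|) :=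
          ENNReal.ofReal_le_ofReal habs
      _ = ENNReal.ofReal |f (Fin.snoc x t)|
            + ENNReal.ofReal |∫ τ in (0:ℝ)..t, g (Fin.snoc x τ)| :=
          ENNReal.ofReal_add (abs_nonneg _) (abs_nonneg _)
      _ ≤ ENNReal.ofReal |f (Fin.snoc x t)| + G := add_le_add le_rfl hkey
  calc ENNReal.ofReal |φ x|
      = ENNReal.ofReal |φ x| * volume (Set.Ioo (0:ℝ) 1) := by
        simp [Real.volume_Ioo]
    _ = ∫⁻ _t in Set.Ioo (0:ℝ) 1, ENNReal.ofReal |φ x| := (setLIntegral_const _ _).symm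
    _ ≤ ∫⁻ t in Set.Ioo (0:ℝ) 1, (ENNReal.ofReal |f (Fin.snoc x t)| + G) :=
        lintegral_mono_ae hb
    _ = (∫⁻ t in Set.Ioo (0:ℝ) 1, ENNReal.ofReal |f (Fin.snoc x t)|)
          + G * volume (Set.Ioo (0:ℝ) 1) := by
        rw [lintegral_add_right _ measurable_const, setLIntegral_const]
    _ = _ := by simp [Real.volume_Ioo]
end ptwise

theorem statement7' (n : ℕ) (γ : Euc (n+1) → ℝ) (Cγ : ℝ)
    (hγpos : ∀ᵐ z ∂(volume : Measure (Euc (n+1))), 0 < γ z)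
    (hA1 : ∀ (a : Euc (n+1)) (r : ℝ), 0 < r → r ≤ 1 →
      (∫⁻ z in cube (n+1) a r, ENNReal.ofReal (γ z)) ≤
        ENNReal.ofReal Cγ * ENNReal.ofReal r ^ (n+1) *
          essInf (fun z => ENNReal.ofReal (γ z)) (volume.restrict (cube (n+1) a r)))
    (f g : Euc (n+1) → ℝ)
    (hf : LocallyIntegrableOn f (prodSet n Set.univ (Set.Ioo 0 1)) volume)
    (hg : LocallyIntegrableOn g (prodSet n Set.univ (Set.Ioo 0 1)) volume)
    (φ : Euc n → ℝ)
    (hrep : ∀ᵐ x ∂(volume : Measure (Euc n)),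
      ∀ᵐ t ∂(volume.restrict (Set.Ioo (0:ℝ) 1)),
        f (Fin.snoc x t) - φ x = ∫ τ in (0:ℝ)..t, g (Fin.snoc x τ)) :
    ∑' m : Fin n → ℤ,
        (∫⁻ z in prodSet n (dyadicCube n 0 m) (Set.Ioo 0 1), ENNReal.ofReal (γ z)) *
          ∫⁻ x in dyadicCube n 0 m, ENNReal.ofReal |φ x| ≤
      ENNReal.ofReal Cγ *
        ((∫⁻ z in prodSet n Set.univ (Set.Ioo 0 1), ENNReal.ofReal (γ z * |g z|)) +
          ∫⁻ z in prodSet n Set.univ (Set.Ioo 0 1), ENNReal.ofReal (γ z * |f z|)) := by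
  have habs : Measurable (fun r : ℝ => ENNReal.ofReal |r|) :=
    ENNReal.measurable_ofReal.comp continuous_abs.measurable
  have hfm : AEMeasurable (fun z => ENNReal.ofReal |f z|)
      (volume.restrict (prodSet n Set.univ (Set.Ioo 0 1))) :=
    habs.comp_aemeasurable hf.aestronglyMeasurable.aemeasurable
  have hgm : AEMeasurable (fun z => ENNReal.ofReal |g z|)
      (volume.restrict (prodSet n Set.univ (Set.Ioo 0 1))) :=
    habs.comp_aemeasurable hg.aestronglyMeasurable.aemeasurable
  have hSmsub : ∀ m : Fin n → ℤ,
      prodSet n (dyadicCube n 0 m) (Set.Ioo 0 1) ⊆ prodSet n Set.univ (Set.Ioo 0 1) :=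
    fun m z hz => ⟨trivial, hz.2⟩
  have hSmMeas : ∀ m : Fin n → ℤ, MeasurableSet (prodSet n (dyadicCube n 0 m) (Set.Ioo 0 1)) :=
    fun m => measurableSet_prodSet' (measurableSet_cube' _ _ _) measurableSet_Ioo
  have hres : ∀ m : Fin n → ℤ,
      volume.restrict (prodSet n (dyadicCube n 0 m) (Set.Ioo 0 1))
        ≤ volume.restrict (prodSet n Set.univ (Set.Ioo 0 1)) :=
    fun m => Measure.restrict_mono (hSmsub m) le_rfl
  have key : ∀ m : Fin n → ℤ,
      (∫⁻ z in prodSet n (dyadicCube n 0 m) (Set.Ioo 0 1), ENNReal.ofReal (γ z)) *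
          (∫⁻ x in dyadicCube n 0 m, ENNReal.ofReal |φ x|) ≤
        ENNReal.ofReal Cγ *
          ((∫⁻ z in prodSet n (dyadicCube n 0 m) (Set.Ioo 0 1), ENNReal.ofReal (γ z * |g z|)) +
            ∫⁻ z in prodSet n (dyadicCube n 0 m) (Set.Ioo 0 1), ENNReal.ofReal (γ z * |f z|)) := by
    intro m
    set Q := dyadicCube n 0 m with hQ
    set Sm := prodSet n (dyadicCube n 0 m) (Set.Ioo 0 1) with hSm
    set E := essInf (fun z => ENNReal.ofReal (γ z)) (volume.restrict Sm) with hE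
    have hQm : MeasurableSet Q := measurableSet_cube' _ _ _
    have hwint : (∫⁻ z in Sm, ENNReal.ofReal (γ z)) ≤ ENNReal.ofReal Cγ * E := by
      have h := hA1 (Fin.snoc (fun i => (m i : ℝ)) 0) 1 one_pos le_rfl
      rw [← prodSet_dyadic_eq_cube n m] at h
      simpa using h
    have hfub_f := fubini_box n hQm (hfm.mono_measure (hres m))
    have hfub_g := fubini_box n hQm (hgm.mono_measure (hres m))
    have hφb : (∫⁻ x in Q, ENNReal.ofReal |φ x|) ≤
        (∫⁻ z in Sm, ENNReal.ofReal |f z|) + ∫⁻ z in Sm, ENNReal.ofReal |g z| := by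
      calc (∫⁻ x in Q, ENNReal.ofReal |φ x|)
          ≤ ∫⁻ x in Q, ((∫⁻ t in Set.Ioo (0:ℝ) 1, ENNReal.ofReal |f (Fin.snoc x t)|)
              + ∫⁻ t in Set.Ioo (0:ℝ) 1, ENNReal.ofReal |g (Fin.snoc x t)|) :=
            lintegral_mono_ae (ae_restrict_of_ae (pointwise_bound n f g φ hrep))
        _ = (∫⁻ x in Q, ∫⁻ t in Set.Ioo (0:ℝ) 1, ENNReal.ofReal |f (Fin.snoc x t)|)
              + ∫⁻ x in Q, ∫⁻ t in Set.Ioo (0:ℝ) 1, ENNReal.ofReal |g (Fin.snoc x t)| :=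
            lintegral_add_left' hfub_f.2 _
        _ = _ := by rw [← hfub_f.1, ← hfub_g.1]
    have hweight : ∀ h : Euc (n+1) → ℝ,
        AEMeasurable (fun z => ENNReal.ofReal |h z|) (volume.restrict Sm) →
        E * (∫⁻ z in Sm, ENNReal.ofReal |h z|) ≤ ∫⁻ z in Sm, ENNReal.ofReal (γ z * |h z|) := by
      intro h hm
      rw [← lintegral_const_mul'' E hm]
      apply lintegral_mono_ae
      have h1 : ∀ᵐ z ∂(volume.restrict Sm),
          essInf (fun z => ENNReal.ofReal (γ z)) (volume.restrict Sm) ≤ ENNReal.ofReal (γ z) :=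
        ae_essInf_le
      rw [← hE] at h1
      filter_upwards [h1, ae_restrict_of_ae hγpos] with z hz1 hz2
      calc E * ENNReal.ofReal |h z| ≤ ENNReal.ofReal (γ z) * ENNReal.ofReal |h z| :=
            mul_le_mul' hz1 le_rfl
        _ = ENNReal.ofReal (γ z * |h z|) := (ENNReal.ofReal_mul hz2.le).symm
    calc (∫⁻ z in Sm, ENNReal.ofReal (γ z)) * (∫⁻ x in Q, ENNReal.ofReal |φ x|)
        ≤ (ENNReal.ofReal Cγ * E) * (∫⁻ x in Q, ENNReal.ofReal |φ x|) :=
          mul_le_mul' hwint le_rfl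
      _ = ENNReal.ofReal Cγ * (E * ∫⁻ x in Q, ENNReal.ofReal |φ x|) := mul_assoc _ _ _
      _ ≤ ENNReal.ofReal Cγ * (E * ((∫⁻ z in Sm, ENNReal.ofReal |f z|)
            + ∫⁻ z in Sm, ENNReal.ofReal |g z|)) :=
          mul_le_mul' le_rfl (mul_le_mul' le_rfl hφb)
      _ = ENNReal.ofReal Cγ * (E * (∫⁻ z in Sm, ENNReal.ofReal |f z|)
            + E * ∫⁻ z in Sm, ENNReal.ofReal |g z|) := by rw [mul_add]
      _ ≤ ENNReal.ofReal Cγ * ((∫⁻ z in Sm, ENNReal.ofReal (γ z * |f z|))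
            + ∫⁻ z in Sm, ENNReal.ofReal (γ z * |g z|)) :=
          mul_le_mul' le_rfl
            (add_le_add (hweight f (hfm.mono_measure (hres m)))
              (hweight g (hgm.mono_measure (hres m))))
      _ = _ := by rw [add_comm]
  have hdisj : Pairwise (Function.onFun Disjoint
      (fun m : Fin n → ℤ => prodSet n (dyadicCube n 0 m) (Set.Ioo 0 1))) :=
    fun m m' h => dyadic_disjoint n h
  have hsum : ∀ F : Euc (n+1) → ℝ≥0∞,
      (∑' m : Fin n → ℤ, ∫⁻ z in prodSet n (dyadicCube n 0 m) (Set.Ioo 0 1), F z)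
        ≤ ∫⁻ z in prodSet n Set.univ (Set.Ioo 0 1), F z := by
    intro F
    rw [← lintegral_iUnion hSmMeas hdisj]
    exact lintegral_mono_set (Set.iUnion_subset hSmsub)
  calc ∑' m : Fin n → ℤ,
        (∫⁻ z in prodSet n (dyadicCube n 0 m) (Set.Ioo 0 1), ENNReal.ofReal (γ z)) *
          (∫⁻ x in dyadicCube n 0 m, ENNReal.ofReal |φ x|)
      ≤ ∑' m : Fin n → ℤ, ENNReal.ofReal Cγ *
          ((∫⁻ z in prodSet n (dyadicCube n 0 m) (Set.Ioo 0 1), ENNReal.ofReal (γ z * |g z|)) +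
            ∫⁻ z in prodSet n (dyadicCube n 0 m) (Set.Ioo 0 1), ENNReal.ofReal (γ z * |f z|)) :=
        ENNReal.tsum_le_tsum key
    _ = ENNReal.ofReal Cγ * ∑' m : Fin n → ℤ,
          ((∫⁻ z in prodSet n (dyadicCube n 0 m) (Set.Ioo 0 1), ENNReal.ofReal (γ z * |g z|)) +
            ∫⁻ z in prodSet n (dyadicCube n 0 m) (Set.Ioo 0 1), ENNReal.ofReal (γ z * |f z|)) :=
        ENNReal.tsum_mul_left
    _ = ENNReal.ofReal Cγ *
          ((∑' m : Fin n → ℤ,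
              ∫⁻ z in prodSet n (dyadicCube n 0 m) (Set.Ioo 0 1), ENNReal.ofReal (γ z * |g z|)) +
            ∑' m : Fin n → ℤ,
              ∫⁻ z in prodSet n (dyadicCube n 0 m) (Set.Ioo 0 1), ENNReal.ofReal (γ z * |f z|)) := by
        rw [ENNReal.tsum_add]
    _ ≤ _ := mul_le_mul' le_rfl (add_le_add (hsum _) (hsum _))

theorem statement7 (n : ℕ) (γ : Euc (n+1) → ℝ) (Cγ : ℝ) (hγ : A1loc n γ Cγ)
    (f g : Euc (n+1) → ℝ) (φ : Euc n → ℝ)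
    (hφ : LocallyIntegrable φ (volume : Measure (Euc n)))
    (hwd : HasWeakDeriv (n+1) (prodSet n Set.univ (Set.Ioo 0 1))
      (Pi.single (Fin.last n) 1) f g)
    (hrep : ∀ᵐ x ∂(volume : Measure (Euc n)),
      ∀ᵐ t ∂(volume.restrict (Set.Ioo (0:ℝ) 1)),
        f (Fin.snoc x t) - φ x = ∫ τ in (0:ℝ)..t, g (Fin.snoc x τ)) :
    ∑' m : Fin n → ℤ,
        wInt (n+1) γ (prodSet n (dyadicCube n 0 m) (Set.Ioo 0 1)) *
          ∫⁻ x in dyadicCube n 0 m, ENNReal.ofReal |φ x| ≤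
      ENNReal.ofReal Cγ *
        ((∫⁻ z in prodSet n Set.univ (Set.Ioo 0 1), ENNReal.ofReal (γ z * |g z|)) +
          ∫⁻ z in prodSet n Set.univ (Set.Ioo 0 1), ENNReal.ofReal (γ z * |f z|)) := by
  obtain ⟨hγint, hγpos, hC1, hA1⟩ := hγ
  exact statement7' n γ Cγ hγpos hA1 f g hwd.1 hwd.2.1 φ hrep
end

section
/- Let λ = 2^{-k₀} for some k₀ ∈ ℤ≥0 and let Q, Q′ be two open dyadic cubes in ℝⁿ. If (1+λ)Q ∩ (1+λ)Q′ ≠ ∅, then |(1+λ)Q ∩ (1+λ)Q′| ≥ (λ/2)ⁿ min{|Q|, |Q′|}, where (1+λ)Q denotes the dilate of Q about its center by the factor 1+λ. -/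
open MeasureTheory ENNReal Filter

open scoped ENNReal
open MeasureTheory Filter


section Statement12Aux

open MeasureTheory

lemma cube_eq_pi' (d : ℕ) (a : Euc d) (r : ℝ) :
    cube d a r = Set.pi Set.univ (fun i => Set.Ioo (a i) (a i + r)) := by
  ext x; simp [cube, Set.mem_pi]

lemma volume_cube' (d : ℕ) (a : Euc d) (r : ℝ) :
    volume (cube d a r) = ENNReal.ofReal r ^ d := by
  rw [cube_eq_pi', volume_pi_pi]
  simp [Real.volume_Ioo]


lemma oneDim (k₀ k k' : ℕ) (hk : k' ≤ k) (lam δ δ' : ℝ)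
    (hlam : lam = (2:ℝ)^(-(k₀:ℤ))) (hδ : δ = (2:ℝ)^(-(k:ℤ))) (hδ' : δ' = (2:ℝ)^(-(k':ℤ)))
    (p q : ℤ) (x : ℝ)
    (hx1 : x ∈ Set.Ioo ((p:ℝ)*δ - lam*δ/2) ((p:ℝ)*δ - lam*δ/2 + (1+lam)*δ))
    (hx2 : x ∈ Set.Ioo ((q:ℝ)*δ' - lam*δ'/2) ((q:ℝ)*δ' - lam*δ'/2 + (1+lam)*δ')) :
    lam*δ/2 ≤ min ((p:ℝ)*δ - lam*δ/2 + (1+lam)*δ) ((q:ℝ)*δ' - lam*δ'/2 + (1+lam)*δ')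
             - max ((p:ℝ)*δ - lam*δ/2) ((q:ℝ)*δ' - lam*δ'/2) := by
  obtain ⟨e, rfl⟩ : ∃ e, k = k' + e := ⟨k - k', by omega⟩
  set L1 := (p:ℝ)*δ - lam*δ/2 with hL1
  set R1 := L1 + (1+lam)*δ with hR1
  set L2 := (q:ℝ)*δ' - lam*δ'/2 with hL2
  set R2 := L2 + (1+lam)*δ' with hR2
  set u : ℝ := (2:ℝ)^(-((k'+e+k₀+1:ℕ):ℤ)) with hu
  have hupos : 0 < u := by positivity
  have pow_eq : ∀ N : ℕ, (2:ℝ)^(-(N:ℤ)) = ((2:ℝ)^N)⁻¹ := fun N => by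
    rw [zpow_neg, zpow_natCast]
  have h2 : (0:ℝ) < 2 := two_pos
  have key : ∀ (M : ℤ) (L R : ℝ), R - L = (M:ℝ) * u → L < R → u ≤ R - L := by
    intro M L R hid hlt
    have hRL : 0 < R - L := by linarith
    have hMpos : 0 < (M:ℝ) := by
      by_contra hc
      push_neg at hc
      nlinarith [hid]
    have hM1 : (1:ℝ) ≤ (M:ℝ) := by
      exact_mod_cast (by exact_mod_cast hMpos : (0:ℤ) < M)
    nlinarith [hid]
  have goal_eq : lam*δ/2 = u := by
    rw [hlam, hδ, hu]
    simp only [pow_eq]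
    rw [pow_add, pow_add, pow_add]
    field_simp
    ring
  have e11 : R1 - L1 = (((2^(k₀+1) + 2 : ℤ)):ℝ) * u := by
    rw [hR1, hlam, hδ, hu]
    simp only [pow_eq]
    push_cast
    rw [pow_add, pow_add, pow_add, pow_add]
    field_simp
    ring
  have e22 : R2 - L2 = ((((2^(k₀+1) + 2) * 2^e : ℤ)):ℝ) * u := by
    rw [hR2, hlam, hδ', hu]
    simp only [pow_eq]
    push_cast
    rw [pow_add, pow_add, pow_add]
    field_simp
    ring
  have e21 : R2 - L1 = ((((q+1)*2^e - p)*2^(k₀+1) + 2^e + 1 : ℤ):ℝ) * u := by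
    rw [hR2, hL2, hL1, hlam, hδ, hδ', hu]
    simp only [pow_eq]
    push_cast
    rw [pow_add, pow_add, pow_add, pow_add]
    field_simp
    ring
  have e12 : R1 - L2 = (((p+1 - q*2^e)*2^(k₀+1) + 2^e + 1 : ℤ):ℝ) * u := by
    rw [hR1, hL1, hL2, hlam, hδ, hδ', hu]
    simp only [pow_eq]
    push_cast
    rw [pow_add, pow_add, pow_add, pow_add]
    field_simp
    ring
  have b11 : u ≤ R1 - L1 := key _ _ _ e11 (hx1.1.trans hx1.2)
  have b22 : u ≤ R2 - L2 := key _ _ _ e22 (hx2.1.trans hx2.2)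
  have b21 : u ≤ R2 - L1 := key _ _ _ e21 (hx1.1.trans hx2.2)
  have b12 : u ≤ R1 - L2 := key _ _ _ e12 (hx2.1.trans hx1.2)
  rw [goal_eq]
  rcases min_cases R1 R2 with ⟨hm, _⟩ | ⟨hm, _⟩ <;>
    rcases max_cases L1 L2 with ⟨hM, _⟩ | ⟨hM, _⟩ <;> rw [hm, hM] <;> linarith


lemma statement12_aux (n k₀ : ℕ) (lam : ℝ) (hlam : lam = (2:ℝ) ^ (-(k₀:ℤ)))
    (k k' : ℕ) (hk : k' ≤ k) (m m' : Fin n → ℤ)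
    (h : (dilatedCube n lam k m ∩ dilatedCube n lam k' m').Nonempty) :
    ENNReal.ofReal ((lam/2)^n) *
        min (volume (dyadicCube n k m)) (volume (dyadicCube n k' m')) ≤
      volume (dilatedCube n lam k m ∩ dilatedCube n lam k' m') := by
  set δ : ℝ := (2:ℝ)^(-(k:ℤ)) with hδ
  set δ' : ℝ := (2:ℝ)^(-(k':ℤ)) with hδ'
  have hδpos : 0 < δ := by positivity
  have hδ'pos : 0 < δ' := by positivity
  have hlampos : 0 < lam := by rw [hlam]; positivity
  have hδle : δ ≤ δ' := by
    rw [hδ, hδ']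
    exact zpow_le_zpow_right₀ one_le_two (by omega)
  have hv1 : volume (dyadicCube n k m) = ENNReal.ofReal δ ^ n := by
    rw [dyadicCube, volume_cube']
  have hv2 : volume (dyadicCube n k' m') = ENNReal.ofReal δ' ^ n := by
    rw [dyadicCube, volume_cube']
  have hmin : min (volume (dyadicCube n k m)) (volume (dyadicCube n k' m'))
      = ENNReal.ofReal δ ^ n := by
    rw [hv1, hv2, min_eq_left]
    exact pow_le_pow_left' (ENNReal.ofReal_le_ofReal hδle) n
  obtain ⟨x, hx1, hx2⟩ := h
  have hx1' : ∀ i, x i ∈ Set.Ioo ((m i : ℝ) * δ - lam * δ / 2)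
      ((m i : ℝ) * δ - lam * δ / 2 + (1+lam)*δ) := hx1
  have hx2' : ∀ i, x i ∈ Set.Ioo ((m' i : ℝ) * δ' - lam * δ' / 2)
      ((m' i : ℝ) * δ' - lam * δ' / 2 + (1+lam)*δ') := hx2
  have hinter : dilatedCube n lam k m ∩ dilatedCube n lam k' m'
      = Set.pi Set.univ (fun i => Set.Ioo
          (max ((m i : ℝ) * δ - lam * δ / 2) ((m' i : ℝ) * δ' - lam * δ' / 2))
          (min ((m i : ℝ) * δ - lam * δ / 2 + (1+lam)*δ)
               ((m' i : ℝ) * δ' - lam * δ' / 2 + (1+lam)*δ'))) := by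
    rw [dilatedCube, dilatedCube, cube_eq_pi', cube_eq_pi', ← Set.pi_inter_distrib]
    simp only [Set.Ioo_inter_Ioo, ← hδ, ← hδ']
  have hLHS : ENNReal.ofReal ((lam/2)^n) * ENNReal.ofReal δ ^ n
      = ENNReal.ofReal (lam * δ / 2) ^ n := by
    rw [ENNReal.ofReal_pow (by positivity), ← mul_pow,
      ← ENNReal.ofReal_mul (by positivity)]
    congr 1
    ring
  rw [hmin, hLHS, hinter, volume_pi_pi]
  simp only [Real.volume_Ioo]
  calc ENNReal.ofReal (lam*δ/2) ^ n
      = ∏ _i : Fin n, ENNReal.ofReal (lam*δ/2) := by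
        simp [Finset.prod_const]
    _ ≤ ∏ i : Fin n, ENNReal.ofReal
          (min ((m i : ℝ) * δ - lam * δ / 2 + (1+lam)*δ)
               ((m' i : ℝ) * δ' - lam * δ' / 2 + (1+lam)*δ')
           - max ((m i : ℝ) * δ - lam * δ / 2) ((m' i : ℝ) * δ' - lam * δ' / 2)) := by
        refine Finset.prod_le_prod' fun i _ => ENNReal.ofReal_le_ofReal ?_
        exact oneDim k₀ k k' hk lam δ δ' hlam hδ hδ' (m i) (m' i) (x i) (hx1' i) (hx2' i)

end Statement12Aux

theorem statement12 (n k₀ : ℕ) (lam : ℝ) (hlam : lam = (2:ℝ) ^ (-(k₀:ℤ)))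
    (k k' : ℕ) (m m' : Fin n → ℤ)
    (h : (dilatedCube n lam k m ∩ dilatedCube n lam k' m').Nonempty) :
    ENNReal.ofReal ((lam/2)^n) *
        min (volume (dyadicCube n k m)) (volume (dyadicCube n k' m')) ≤
      volume (dilatedCube n lam k m ∩ dilatedCube n lam k' m') := by
  rcases le_total k' k with hk | hk
  · exact statement12_aux n k₀ lam hlam k k' hk m m' h
  · rw [Set.inter_comm] at h ⊢
    rw [min_comm]
    exact statement12_aux n k₀ lam hlam k' k hk m' m h
end

section
/- Fix λ = 2^{-k₀}, k₀ ∈ ℤ≥0. There exists a constant C > 0 depending only on n (and λ) such that for every φ ∈ L¹(ℝⁿ) there exists a strictly increasing sequence of nonnegative integers (l_j)_{j≥0} with l₀ = 0 such that ∑_{j=0}^∞ ∑_{m∈ℤⁿ} E((1+λ)Q_{l_j,m})φ ≤ C ‖φ‖_{L¹(ℝⁿ)}, where (1+λ)Q denotes the dilate of Q about its center. -/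
open MeasureTheory ENNReal Filter

open scoped ENNReal
open MeasureTheory Filter

section AuxStatement19

open MeasureTheory ENNReal Filter Set

-- test lemmas
lemma isOpen_cube (d : ℕ) (a : Euc d) (r : ℝ) : IsOpen (cube d a r) := by
  have : cube d a r = ⋂ i, (fun x : Euc d => x i) ⁻¹' Set.Ioo (a i) (a i + r) := by
    ext x; simp [cube]
  rw [this]
  exact isOpen_iInter_of_finite fun i => isOpen_Ioo.preimage (continuous_apply i)

lemma floor_two (t : ℝ) (z : ℤ) (h1 : t < z) (h2 : (z:ℝ) < t + 2) :
    z = ⌊t⌋ + 1 ∨ z = ⌊t⌋ + 2 := by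
  have a1 : ⌊t⌋ < z := Int.floor_lt.2 h1
  have a2 : z - 2 ≤ ⌊t⌋ := Int.le_floor.2 (by push_cast; linarith)
  omega

lemma mem_dilated (n k : ℕ) (lam : ℝ) (hlam1 : lam ≤ 1) {x : Euc n} {m : Fin n → ℤ}
    (hx : x ∈ dilatedCube n lam k m) (i : Fin n) :
    m i = ⌊x i / (2:ℝ)^(-(k:ℤ)) - 1 - lam/2⌋ + 1 ∨
    m i = ⌊x i / (2:ℝ)^(-(k:ℤ)) - 1 - lam/2⌋ + 2 := by
  set r : ℝ := (2:ℝ)^(-(k:ℤ)) with hr'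
  have hr : 0 < r := zpow_pos (by norm_num) _
  obtain ⟨h1, h2⟩ := hx i
  set t : ℝ := x i / r - 1 - lam/2 with ht
  have h2' : x i / r < (m i) + 1 + lam/2 := (div_lt_iff₀ hr).2 (by nlinarith [h2])
  have h1' : ((m i:ℝ) - lam/2) < x i / r := (lt_div_iff₀ hr).2 (by nlinarith [h1])
  exact floor_two t (m i) (by simp only [ht]; linarith) (by simp only [ht]; linarith)

lemma overlap_indicator (n k : ℕ) (lam : ℝ) (hlam1 : lam ≤ 1) (f : Euc n → ℝ≥0∞) (x : Euc n) :
    ∑' m : Fin n → ℤ, (dilatedCube n lam k m).indicator f x ≤ 2^n * f x := by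
  set b : Fin n → ℤ := fun i => ⌊x i / (2:ℝ)^(-(k:ℤ)) - 1 - lam/2⌋ with hb
  set T : Finset (Fin n → ℤ) := Fintype.piFinset fun i => ({b i + 1, b i + 2} : Finset ℤ) with hT
  have hmem : ∀ m : Fin n → ℤ, x ∈ dilatedCube n lam k m → m ∈ T := by
    intro m hm
    rw [hT, Fintype.mem_piFinset]
    intro i
    rcases mem_dilated n k lam hlam1 hm i with h | h
    · rw [h]; exact Finset.mem_insert_self _ _
    · rw [h]; exact Finset.mem_insert_of_mem (Finset.mem_singleton_self _)
  calc ∑' m : Fin n → ℤ, (dilatedCube n lam k m).indicator f x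
      ≤ ∑' m : Fin n → ℤ, (T : Set (Fin n → ℤ)).indicator (fun _ => f x) m := by
        refine ENNReal.tsum_le_tsum fun m => ?_
        by_cases hx : x ∈ dilatedCube n lam k m
        · rw [Set.indicator_of_mem hx, Set.indicator_of_mem (by exact_mod_cast hmem m hx)]
        · rw [Set.indicator_of_notMem hx]; exact zero_le
    _ = ∑ m ∈ T, f x := by
        rw [tsum_eq_sum (s := T) (fun m hm => Set.indicator_of_notMem (by exact_mod_cast hm) _)]
        exact Finset.sum_congr rfl fun m hm => Set.indicator_of_mem (by exact_mod_cast hm) _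
    _ = T.card • f x := by rw [Finset.sum_const]
    _ ≤ 2^n * f x := by
        rw [nsmul_eq_mul]
        refine mul_le_mul_left ?_ _
        have hcard : T.card ≤ 2^n := by
          rw [hT, Fintype.card_piFinset]
          calc ∏ i : Fin n, ({b i + 1, b i + 2} : Finset ℤ).card
              ≤ ∏ _i : Fin n, 2 := Finset.prod_le_prod' fun i _ =>
                (Finset.card_insert_le _ _).trans (by simp)
            _ = 2^n := by simp
        exact_mod_cast Nat.cast_le.2 hcard

lemma sum_setLIntegral_le (n k : ℕ) (lam : ℝ) (hlam1 : lam ≤ 1) {f : Euc n → ℝ≥0∞}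
    (hf : AEMeasurable f (volume : Measure (Euc n))) :
    ∑' m : Fin n → ℤ, ∫⁻ x in dilatedCube n lam k m, f x ≤ 2^n * ∫⁻ x, f x := by
  have hms : ∀ m : Fin n → ℤ, MeasurableSet (dilatedCube n lam k m) :=
    fun m => (isOpen_cube _ _ _).measurableSet
  calc ∑' m : Fin n → ℤ, ∫⁻ x in dilatedCube n lam k m, f x
      = ∑' m : Fin n → ℤ, ∫⁻ x, (dilatedCube n lam k m).indicator f x := by
        refine tsum_congr fun m => (lintegral_indicator (hms m) f).symm
    _ = ∫⁻ x, ∑' m : Fin n → ℤ, (dilatedCube n lam k m).indicator f x :=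
        (lintegral_tsum fun m => (hf.indicator (hms m))).symm
    _ ≤ ∫⁻ x, 2^n * f x := lintegral_mono' le_rfl (fun x => overlap_indicator n k lam hlam1 f x)
    _ = 2^n * ∫⁻ x, f x := lintegral_const_mul' _ _ (by simp)

lemma exists_ofReal_le {c : ℝ≥0∞} (hc : c ≠ 0) : ∃ δ : ℝ, 0 < δ ∧ ENNReal.ofReal δ ≤ c := by
  rcases eq_or_ne c ⊤ with h | h
  · exact ⟨1, one_pos, by simp [h]⟩
  · exact ⟨c.toReal, ENNReal.toReal_pos hc h, by rw [ENNReal.ofReal_toReal h]⟩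

lemma bestApprox_triangle (n : ℕ) (E : Set (Euc n)) (φ g : Euc n → ℝ) (hg : Continuous g) :
    bestApprox n E φ ≤ (∫⁻ x in E, ENNReal.ofReal |φ x - g x|) + bestApprox n E g := by
  simp only [bestApprox]
  rw [ENNReal.add_iInf]
  refine le_iInf fun c => ?_
  refine (iInf_le _ c).trans ?_
  calc ∫⁻ x in E, ENNReal.ofReal |φ x - c|
      ≤ ∫⁻ x in E, (ENNReal.ofReal |φ x - g x| + ENNReal.ofReal |g x - c|) :=
        lintegral_mono fun x =>
          (ENNReal.ofReal_le_ofReal (abs_sub_le _ _ _)).trans ENNReal.ofReal_add_le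
    _ = (∫⁻ x in E, ENNReal.ofReal |φ x - g x|) + ∫⁻ x in E, ENNReal.ofReal |g x - c| :=
        lintegral_add_right _ (ENNReal.continuous_ofReal.comp
          ((hg.sub continuous_const).abs)).measurable

lemma termSum_g (n : ℕ) (lam : ℝ) (hlam0 : 0 < lam) (hlam1 : lam ≤ 1) {g : Euc n → ℝ}
    (hgc : Continuous g) (hgs : HasCompactSupport g) {η : ℝ≥0∞} (hη : η ≠ 0) :
    ∃ K : ℕ, ∀ k ≥ K, ∑' m : Fin n → ℤ, bestApprox n (dilatedCube n lam k m) g ≤ η := by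
  obtain ⟨R, hR⟩ := hgs.isBounded.subset_closedBall 0
  set B := Metric.closedBall (0 : Euc n) (R + 2) with hB
  have hBmeas : MeasurableSet B := measurableSet_closedBall
  have hBfin : volume B ≠ ⊤ := (isCompact_closedBall _ _).measure_lt_top.ne
  set V : ℝ≥0∞ := 2^n * volume B with hV
  have hVfin : V + 1 ≠ ⊤ := ENNReal.add_ne_top.2
    ⟨ENNReal.mul_ne_top (ENNReal.pow_ne_top ENNReal.ofNat_ne_top) hBfin, ENNReal.one_ne_top⟩
  obtain ⟨ε', hε'pos, hε'le⟩ : ∃ δ : ℝ, 0 < δ ∧ ENNReal.ofReal δ ≤ η / (V + 1) :=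
    exists_ofReal_le (ENNReal.div_pos hη hVfin).ne'
  obtain ⟨δ, hδpos, hδ⟩ := Metric.uniformContinuous_iff.1 (hgs.uniformContinuous_of_continuous hgc) ε' hε'pos
  obtain ⟨K, hK⟩ := exists_pow_lt_of_lt_one (show (0:ℝ) < δ/2 by linarith) (show (1:ℝ)/2 < 1 by norm_num)
  have hpow : ∀ k : ℕ, (2:ℝ)^(-(k:ℤ)) = (1/2:ℝ)^k := fun k => by
    rw [zpow_neg, zpow_natCast, one_div, inv_pow]
  refine ⟨K, fun k hk => ?_⟩
  have hrpos : (0:ℝ) < (2:ℝ)^(-(k:ℤ)) := zpow_pos (by norm_num) _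
  have hrle : (1 + lam) * (2:ℝ)^(-(k:ℤ)) < δ := by
    have h1 : (2:ℝ)^(-(k:ℤ)) ≤ (2:ℝ)^(-(K:ℤ)) := by
      rw [hpow, hpow]
      exact pow_le_pow_of_le_one (by norm_num) (by norm_num) hk
    have h2 : (2:ℝ)^(-(K:ℤ)) < δ/2 := by rw [hpow]; exact hK
    nlinarith
  have hr2 : (1 + lam) * (2:ℝ)^(-(k:ℤ)) ≤ 2 := by
    have h1 : (2:ℝ)^(-(k:ℤ)) ≤ 1 := by
      rw [hpow]; exact pow_le_one₀ (by norm_num) (by norm_num)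
    nlinarith
  set f : Euc n → ℝ≥0∞ := fun x => ENNReal.ofReal ε' * B.indicator 1 x with hf
  have hfm : AEMeasurable f (volume : Measure (Euc n)) :=
    ((measurable_const.indicator hBmeas).const_mul _).aemeasurable
  have hcube : ∀ m : Fin n → ℤ,
      bestApprox n (dilatedCube n lam k m) g ≤ ∫⁻ x in dilatedCube n lam k m, f x := by
    intro m
    set r : ℝ := (1 + lam) * (2:ℝ)^(-(k:ℤ)) with hr'
    have hrpos' : 0 < r := by positivity
    by_cases hQS : (dilatedCube n lam k m ∩ tsupport g).Nonempty
    · obtain ⟨y, hyQ, hyS⟩ := hQS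
      set a : Euc n := fun i => (m i : ℝ) * (2:ℝ)^(-(k:ℤ)) - lam * (2:ℝ)^(-(k:ℤ)) / 2 with ha
      refine (iInf_le _ (g a)).trans
        (setLIntegral_mono' (isOpen_cube _ _ _).measurableSet fun x hx => ?_)
      have hdista : dist x a ≤ r := by
        rw [dist_pi_le_iff hrpos'.le]
        intro i
        obtain ⟨h1', h2'⟩ := hx i
        simp only [ha]
        rw [Real.dist_eq, abs_le]
        constructor <;> simp only [ha] at h1' h2' <;> [linarith; linarith]
      have hdxy : dist x y ≤ r := by
        rw [dist_pi_le_iff hrpos'.le]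
        intro i
        obtain ⟨h1', h2'⟩ := hx i
        obtain ⟨h3', h4'⟩ := hyQ i
        rw [Real.dist_eq, abs_le]
        constructor <;> [linarith; linarith]
      have hxB : x ∈ B := by
        have hdyR : dist y 0 ≤ R := by simpa [Metric.mem_closedBall] using hR hyS
        rw [hB, Metric.mem_closedBall]
        calc dist x 0 ≤ dist x y + dist y 0 := dist_triangle _ _ _
          _ ≤ r + R := add_le_add hdxy hdyR
          _ ≤ R + 2 := by rw [hr']; linarith [hr2]
      have hgosc : |g x - g a| ≤ ε' := by
        rw [← Real.dist_eq]
        exact (hδ (lt_of_le_of_lt hdista (by rw [hr']; exact hrle))).le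
      calc ENNReal.ofReal |g x - g a| ≤ ENNReal.ofReal ε' := ENNReal.ofReal_le_ofReal hgosc
        _ = f x := by simp [hf, Set.indicator_of_mem hxB]
    · refine (iInf_le _ 0).trans
        (setLIntegral_mono' (isOpen_cube _ _ _).measurableSet fun x hx => ?_)
      have hgx : g x = 0 := by
        by_contra h
        exact hQS ⟨x, hx, subset_tsupport g h⟩
      simp [hgx]
  calc ∑' m : Fin n → ℤ, bestApprox n (dilatedCube n lam k m) g
      ≤ ∑' m : Fin n → ℤ, ∫⁻ x in dilatedCube n lam k m, f x := ENNReal.tsum_le_tsum hcube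
    _ ≤ 2^n * ∫⁻ x, f x := sum_setLIntegral_le n k lam hlam1 hfm
    _ = ENNReal.ofReal ε' * V := by
        rw [hf, lintegral_const_mul' _ _ ENNReal.ofReal_ne_top,
          lintegral_indicator_one hBmeas, hV]
        ring
    _ ≤ (η / (V + 1)) * V := mul_le_mul_left hε'le _
    _ ≤ (η / (V + 1)) * (V + 1) := mul_le_mul_right le_self_add _
    _ = η := ENNReal.div_mul_cancel (by simp) hVfin

lemma tsum_split_enn (a : ℕ → ℝ≥0∞) : ∑' j, a j = a 0 + ∑' j, a (j+1) :=
  tsum_eq_zero_add' ENNReal.summable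

lemma term_freq (n : ℕ) (lam : ℝ) (hlam0 : 0 < lam) (hlam1 : lam ≤ 1) {φ : Euc n → ℝ}
    (hφ : Integrable φ (volume : Measure (Euc n))) {ε : ℝ≥0∞} (hε : ε ≠ 0) :
    ∃ K : ℕ, ∀ k ≥ K, ∑' m : Fin n → ℤ, bestApprox n (dilatedCube n lam k m) φ ≤ ε := by
  have hhalf : (ε / 2 / 2^n : ℝ≥0∞) ≠ 0 := by
    refine (ENNReal.div_pos (ENNReal.div_pos hε ENNReal.ofNat_ne_top).ne' ?_).ne'
    exact ENNReal.pow_ne_top ENNReal.ofNat_ne_top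
  obtain ⟨g, hgs, hgint, hgc, hgI⟩ := hφ.exists_hasCompactSupport_lintegral_sub_le hhalf
  have hgint' : ∫⁻ x, ENNReal.ofReal |φ x - g x| ≤ ε / 2 / 2^n := by
    simpa [Real.enorm_eq_ofReal_abs] using hgint
  obtain ⟨K, hK⟩ := termSum_g n lam hlam0 hlam1 hgc hgs
    (η := ε / 2) (ENNReal.div_pos hε ENNReal.ofNat_ne_top).ne'
  refine ⟨K, fun k hk => ?_⟩
  have hmeas : AEMeasurable (fun x => ENNReal.ofReal |φ x - g x|) (volume : Measure (Euc n)) :=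
    ((hφ.1.sub hgc.aestronglyMeasurable).norm.aemeasurable).ennreal_ofReal
  calc ∑' m : Fin n → ℤ, bestApprox n (dilatedCube n lam k m) φ
      ≤ ∑' m : Fin n → ℤ, ((∫⁻ x in dilatedCube n lam k m, ENNReal.ofReal |φ x - g x|) +
          bestApprox n (dilatedCube n lam k m) g) :=
        ENNReal.tsum_le_tsum fun m => bestApprox_triangle n _ φ g hgc
    _ = (∑' m : Fin n → ℤ, ∫⁻ x in dilatedCube n lam k m, ENNReal.ofReal |φ x - g x|) +
          ∑' m : Fin n → ℤ, bestApprox n (dilatedCube n lam k m) g := ENNReal.tsum_add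
    _ ≤ 2^n * (∫⁻ x, ENNReal.ofReal |φ x - g x|) + ε / 2 :=
        add_le_add (sum_setLIntegral_le n k lam hlam1 hmeas) (hK k hk)
    _ ≤ 2^n * (ε / 2 / 2^n) + ε / 2 := add_le_add_left (mul_le_mul_right hgint' _) _
    _ ≤ ε / 2 + ε / 2 := add_le_add_left ENNReal.mul_div_le _
    _ = ε := ENNReal.add_halves ε


end AuxStatement19

set_option maxHeartbeats 1000000

theorem statement19 (n k₀ : ℕ) (lam : ℝ) (hlam : lam = (2:ℝ) ^ (-(k₀:ℤ))) :
    ∃ C : ℝ, 0 < C ∧ ∀ φ : Euc n → ℝ, Integrable φ (volume : Measure (Euc n)) →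
      ∃ l : ℕ → ℕ, StrictMono l ∧ l 0 = 0 ∧
        ∑' j : ℕ, ∑' m : Fin n → ℤ, bestApprox n (dilatedCube n lam (l j) m) φ ≤
          ENNReal.ofReal C * ∫⁻ x, ENNReal.ofReal |φ x| := by
  have hlam0 : 0 < lam := by rw [hlam]; positivity
  have hlam1 : lam ≤ 1 := by
    rw [hlam, zpow_neg, zpow_natCast]
    exact inv_le_one_of_one_le₀ (one_le_pow₀ (by norm_num))
  refine ⟨2^n + 2, by positivity, fun φ hφ => ?_⟩
  set I : ℝ≥0∞ := ∫⁻ x, ENNReal.ofReal |φ x| with hI'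
  have hCI : ENNReal.ofReal ((2:ℝ)^n + 2) = (2:ℝ≥0∞)^n + 2 := by
    rw [ENNReal.ofReal_add (by positivity) (by norm_num), ENNReal.ofReal_pow (by norm_num)]
    norm_num
  have hmeas : AEMeasurable (fun x => ENNReal.ofReal |φ x|) (volume : Measure (Euc n)) :=
    (hφ.1.norm.aemeasurable).ennreal_ofReal
  have htriv : ∀ k : ℕ, ∑' m : Fin n → ℤ, bestApprox n (dilatedCube n lam k m) φ ≤ 2^n * I := by
    intro k
    calc ∑' m : Fin n → ℤ, bestApprox n (dilatedCube n lam k m) φ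
        ≤ ∑' m : Fin n → ℤ, ∫⁻ x in dilatedCube n lam k m, ENNReal.ofReal |φ x| :=
          ENNReal.tsum_le_tsum fun m => by
            simpa [bestApprox] using (iInf_le (fun c => ∫⁻ x in dilatedCube n lam k m,
              ENNReal.ofReal |φ x - c|) 0)
      _ ≤ 2^n * I := sum_setLIntegral_le n k lam hlam1 hmeas
  by_cases hI : I = 0
  · refine ⟨id, strictMono_id, rfl, ?_⟩
    have hz : ∀ j : ℕ, ∑' m : Fin n → ℤ, bestApprox n (dilatedCube n lam (id j) m) φ = 0 :=
      fun j => le_antisymm (by simpa [hI] using htriv j) zero_le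
    simp only [hz, tsum_zero]
    exact zero_le
  · have hfreq : ∀ (ε : ℝ≥0∞), ε ≠ 0 → ∀ N : ℕ, ∃ k, N ≤ k ∧
        ∑' m : Fin n → ℤ, bestApprox n (dilatedCube n lam k m) φ ≤ ε := by
      intro ε hε N
      obtain ⟨K, hK⟩ := term_freq n lam hlam0 hlam1 hφ hε
      exact ⟨max N K, le_max_left _ _, hK _ (le_max_right _ _)⟩
    have hεpos : ∀ j : ℕ, ((2:ℝ≥0∞)⁻¹^(j+1) * I) ≠ 0 := fun j =>
      (ENNReal.mul_pos (by simp) hI).ne'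
    have hrec : ∀ N j : ℕ, ∃ k, N ≤ k ∧
        ∑' m : Fin n → ℤ, bestApprox n (dilatedCube n lam k m) φ ≤ (2:ℝ≥0∞)⁻¹^(j+1) * I :=
      fun N j => hfreq _ (hεpos j) N
    choose F hF1 hF2 using hrec
    obtain ⟨l, hl0, hlsucc⟩ : ∃ l : ℕ → ℕ, l 0 = 0 ∧ ∀ j, l (j + 1) = F (l j + 1) j :=
      ⟨fun j => Nat.rec 0 (fun j' prev => F (prev + 1) j') j, rfl, fun j => rfl⟩
    have hlmono : StrictMono l := strictMono_nat_of_lt_succ fun j => by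
      rw [hlsucc]; exact Nat.lt_of_succ_le (hF1 (l j + 1) j)
    refine ⟨l, hlmono, hl0, ?_⟩
    rw [tsum_split_enn (fun j : ℕ => ∑' m : Fin n → ℤ,
      bestApprox n (dilatedCube n lam (l j) m) φ)]
    calc (∑' m : Fin n → ℤ, bestApprox n (dilatedCube n lam (l 0) m) φ) +
          ∑' j : ℕ, ∑' m : Fin n → ℤ, bestApprox n (dilatedCube n lam (l (j+1)) m) φ
        ≤ 2^n * I + ∑' j : ℕ, (2:ℝ≥0∞)⁻¹^(j+1) * I := by
          refine add_le_add (htriv (l 0)) (ENNReal.tsum_le_tsum fun j => ?_)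
          rw [hlsucc]; exact hF2 (l j + 1) j
      _ = 2^n * I + (∑' j : ℕ, (2:ℝ≥0∞)⁻¹^(j+1)) * I := by rw [ENNReal.tsum_mul_right]
      _ ≤ 2^n * I + 1 * I := by
          refine add_le_add_right (mul_le_mul_left ?_ I) _
          have : ∑' j : ℕ, (2:ℝ≥0∞)⁻¹^(j+1) = (∑' j : ℕ, (2:ℝ≥0∞)⁻¹^j) * 2⁻¹ := by
            simp_rw [pow_succ]; rw [ENNReal.tsum_mul_right]
          rw [this, ENNReal.tsum_geometric, ENNReal.one_sub_inv_two, inv_inv]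
          rw [ENNReal.mul_inv_cancel (by norm_num) ENNReal.ofNat_ne_top]
      _ ≤ ENNReal.ofReal (2^n + 2) * I := by
          rw [hCI, one_mul]
          calc (2:ℝ≥0∞)^n * I + I = (2^n + 1) * I := by rw [add_mul, one_mul]
            _ ≤ (2^n + 2) * I := mul_le_mul_left (add_le_add_right (by norm_num) _) _
end
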